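/- arXiv:1908.03893 — 3 statements merged into one kernel-verified Lean document; each statement's English description precedes it below -/
import Mathlib

section
/- Let S_n be the star on n ≥ 2 vertices and α ∈ [0,1]. Then the α-distance energy of S_n equals [α(−3n²+8n−4) + 2n² − 4n + n√((α−2)²n² + 8αn − 12n − 8α + 12)]/(2n) + |[α(−3n²+8n−4) + 2n² − 4n − n√((α−2)²n² + 8αn − 12n − 8α + 12)]/(2n)| + |3α − 2 − 2α/n|·(n−2). -/
open Finset Matrix Polynomial Real

/-- Distance matrix of a graph on `Fin n`: `(i,j)` entry is the graph distance. -/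
noncomputable def distMatrix {n : ℕ} (G : SimpleGraph (Fin n)) : Matrix (Fin n) (Fin n) ℝ :=
  fun i j => (G.dist i j : ℝ)

/-- Transmission of a vertex: sum of distances to all other vertices. -/
noncomputable def transmission {n : ℕ} (G : SimpleGraph (Fin n)) (i : Fin n) : ℝ :=
  ∑ j, (G.dist i j : ℝ)

/-- The α-distance matrix `D_α(G) = α·Tr(G) + (1-α)·D(G)`. -/
noncomputable def alphaDistMatrix {n : ℕ} (G : SimpleGraph (Fin n)) (α : ℝ) : Matrix (Fin n) (Fin n) ℝ :=
  α • Matrix.diagonal (transmission G) + (1 - α) • distMatrix G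

/-- Wiener index `W(G) = (1/2)·∑_{i≠j} d(v_i,v_j)`. -/
noncomputable def wiener {n : ℕ} (G : SimpleGraph (Fin n)) : ℝ :=
  (1 / 2) * ∑ i, ∑ j, (G.dist i j : ℝ)

/-- Frobenius norm of a real matrix. -/
noncomputable def frobNorm {n : ℕ} (M : Matrix (Fin n) (Fin n) ℝ) : ℝ :=
  Real.sqrt (∑ i, ∑ j, (M i j) ^ 2)

/-- The star on `n` vertices: vertex `0` is adjacent to every other vertex. -/
def starGraph (n : ℕ) : SimpleGraph (Fin n) where
  Adj i j := i ≠ j ∧ ((i : ℕ) = 0 ∨ (j : ℕ) = 0)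
  symm := ⟨fun _ _ h => ⟨h.1.symm, h.2.symm⟩⟩
  loopless := ⟨fun _ h => h.1 rfl⟩

/-! Writing `μ = α(2n-1) - 2`, the matrix `D_α(S_n) - μ I` only depends on whether the row and
column vertices are the hub or leaves, so it is the blow-up of a `2 × 2` matrix `Q` along the
partition {hub}, {leaves}. Its characteristic polynomial is therefore `(X - μ)^(n-2)` times that
of the `2 × 2` quotient `μ I + Q · diag(1, n - 1)`, whose roots are `((α+2)n - 4 ± √Δ)/2` with
`Δ` the radicand of the statement.
The energy is then a sum of three absolute values; the one for the largest eigenvalue can be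
dropped because that eigenvalue is at least the mean eigenvalue `2αW/n = tr D_α / n`. -/

theorem Fin.sum_ite_val_eq_zero {n : ℕ} (hn : 0 < n) (a b : ℝ) :
    ∑ i : Fin n, (if (i : ℕ) = 0 then a else b) = a + (n - 1) * b := by
  obtain ⟨m, rfl⟩ := Nat.exists_eq_add_of_lt hn
  simp [Fin.sum_univ_succ]

theorem Polynomial.X_sq_sub_C_mul_X_add_C_eq {R : Type*} [CommRing R] {a b t d : R}
    (ht : a + b = t) (hd : a * b = d) : X ^ 2 - C t * X + C d = (X - C a) * (X - C b) := by
  subst ht hd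
  simp only [C_add, C_mul]
  ring

namespace Matrix

theorem charpoly_smul_one_add {n R : Type*} [Fintype n] [DecidableEq n] [CommRing R]
    (M : Matrix n n R) (μ : R) : (μ • 1 + M).charpoly = M.charpoly.comp (X - C μ) := by
  have h := charpoly_sub_scalar (μ • 1 + M) μ
  rw [scalar_apply, ← smul_one_eq_diagonal, add_sub_cancel_left] at h
  rw [h, comp_assoc]
  simp

theorem charpoly_smul_one_add_mul_comm {m n R : Type*} [Fintype m] [Fintype n]
    [DecidableEq m] [DecidableEq n] [CommRing R] (A : Matrix n m R) (B : Matrix m n R) (μ : R)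
    (h : Fintype.card m ≤ Fintype.card n) :
    (μ • 1 + A * B).charpoly =
      (X - C μ) ^ (Fintype.card n - Fintype.card m) * (μ • 1 + B * A).charpoly := by
  rw [charpoly_smul_one_add, charpoly_smul_one_add, charpoly_mul_comm_of_le A B h, mul_comp,
    X_pow_comp]

theorem submatrix_eq_one_submatrix_mul_mul_transpose {ι κ R : Type*} [Fintype κ]
    [DecidableEq κ] [NonAssocSemiring R] (c : ι → κ) (M : Matrix κ κ R) :
    M.submatrix c c =
      (1 : Matrix κ κ R).submatrix c id * (M * ((1 : Matrix κ κ R).submatrix c id)ᵀ) := by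
  ext i j
  simp [mul_apply, one_apply]

theorem transpose_one_submatrix_mul_one_submatrix {ι κ R : Type*} [Fintype ι]
    [DecidableEq κ] [NonAssocSemiring R] (c : ι → κ) :
    ((1 : Matrix κ κ R).submatrix c id)ᵀ * (1 : Matrix κ κ R).submatrix c id =
      diagonal fun k => (#{i | c i = k} : R) := by
  ext k l
  by_cases hkl : k = l
  · subst hkl
    simp +contextual [mul_apply, one_apply, Finset.sum_boole]
  · simp +contextual [mul_apply, one_apply, hkl]

theorem charpoly_smul_one_add_submatrix {ι κ R : Type*} [Fintype ι] [Fintype κ]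
    [DecidableEq ι] [DecidableEq κ] [CommRing R] (c : ι → κ) (M : Matrix κ κ R) (μ : R)
    (h : Fintype.card κ ≤ Fintype.card ι) :
    (μ • 1 + M.submatrix c c).charpoly = (X - C μ) ^ (Fintype.card ι - Fintype.card κ) *
      (μ • 1 + M * diagonal fun k => (#{i | c i = k} : R)).charpoly := by
  rw [submatrix_eq_one_submatrix_mul_mul_transpose, charpoly_smul_one_add_mul_comm _ _ _ h,
    Matrix.mul_assoc, transpose_one_submatrix_mul_one_submatrix]

theorem IsHermitian.sum_eigenvalues_eq_sum_roots {n : Type*} [Fintype n] [DecidableEq n]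
    {A : Matrix n n ℝ} (hA : A.IsHermitian) (f : ℝ → ℝ) :
    ∑ i, f (hA.eigenvalues i) = (A.charpoly.roots.map f).sum := by
  rw [hA.roots_charpoly_eq_eigenvalues, RCLike.ofReal_real_eq_id, Multiset.map_map]
  rfl

end Matrix

theorem starGraph_dist {n : ℕ} (i j : Fin n) :
    (starGraph n).dist i j = if i = j then 0 else if (i : ℕ) = 0 ∨ (j : ℕ) = 0 then 1 else 2 := by
  split_ifs with hij hadj
  · simp [hij]
  · exact SimpleGraph.dist_eq_one_iff_adj.2 ⟨hij, hadj⟩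
  · push Not at hadj
    let hub : Fin n := ⟨0, i.pos⟩
    have hi : (starGraph n).Adj i hub := ⟨fun h => hadj.1 (congrArg Fin.val h), Or.inr rfl⟩
    have hj : (starGraph n).Adj hub j := ⟨fun h => hadj.2 (congrArg Fin.val h).symm, Or.inl rfl⟩
    let w := SimpleGraph.Walk.cons hi (SimpleGraph.Walk.cons hj .nil)
    have hle : (starGraph n).dist i j ≤ 2 := SimpleGraph.dist_le w
    have hpos : 0 < (starGraph n).dist i j := SimpleGraph.Reachable.pos_dist_of_ne ⟨w⟩ hij
    have hne : (starGraph n).dist i j ≠ 1 := fun h =>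
      by simpa [hadj] using (SimpleGraph.dist_eq_one_iff_adj.1 h).2
    omega

theorem transmission_starGraph {n : ℕ} (i : Fin n) :
    transmission (starGraph n) i = if (i : ℕ) = 0 then (n : ℝ) - 1 else 2 * n - 3 := by
  have hn := i.pos
  unfold transmission
  split_ifs with hi
  · have hdist : ∀ j : Fin n, ((starGraph n).dist i j : ℝ) = if (j : ℕ) = 0 then 0 else 1 := by
      intro j
      simp [starGraph_dist, hi, Fin.ext_iff, eq_comm]
    simp only [hdist, Fin.sum_ite_val_eq_zero hn]
    ring
  · have hdist : ∀ j : Fin n, ((starGraph n).dist i j : ℝ) =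
        (if (j : ℕ) = 0 then 1 else 2) - if i = j then 2 else 0 := by
      intro j
      by_cases hij : i = j
      · subst hij
        simp [hi]
      · simp [starGraph_dist, hi, hij]
    simp only [hdist, Finset.sum_sub_distrib, Fin.sum_ite_val_eq_zero hn, Finset.sum_ite_eq,
      Finset.mem_univ, if_true]
    ring

theorem wiener_starGraph {n : ℕ} (hn : 0 < n) : wiener (starGraph n) = ((n : ℝ) - 1) ^ 2 := by
  change 1 / 2 * ∑ i, transmission (starGraph n) i = _
  simp only [transmission_starGraph, Fin.sum_ite_val_eq_zero hn]
  ring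

def starClass {n : ℕ} (i : Fin n) : Fin 2 := if (i : ℕ) = 0 then 0 else 1

theorem card_starClass {n : ℕ} (hn : 0 < n) :
    (fun k => (#{i : Fin n | starClass i = k} : ℝ)) = ![1, (n : ℝ) - 1] := by
  ext k
  rw [Finset.natCast_card_filter]
  fin_cases k <;> simp [starClass, apply_ite (· = (1 : Fin 2)), Fin.sum_ite_val_eq_zero hn]

theorem alphaDistMatrix_starGraph {n : ℕ} (α : ℝ) :
    alphaDistMatrix (starGraph n) α = (α * (2 * n - 1) - 2) • 1 +
      (!![2 - α * n, 1 - α; 1 - α, 2 * (1 - α)]).submatrix starClass starClass := by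
  ext i j
  by_cases hij : i = j
  · subst hij
    by_cases hi : (i : ℕ) = 0 <;>
    simp [alphaDistMatrix, distMatrix, transmission_starGraph, starClass, hi] <;> ring
  · have hnot_both : ¬ ((i : ℕ) = 0 ∧ (j : ℕ) = 0) := fun h => hij (Fin.ext (h.1.trans h.2.symm))
    by_cases hi : (i : ℕ) = 0 <;> by_cases hj : (j : ℕ) = 0 <;>
    simp_all [alphaDistMatrix, distMatrix, starGraph_dist, starClass]
    ring

def starDisc (n : ℕ) (α : ℝ) : ℝ :=
  (α - 2) ^ 2 * (n : ℝ) ^ 2 + 8 * α * n - 12 * n - 8 * α + 12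

theorem starDisc_nonneg {n : ℕ} (hn : 1 ≤ n) (α : ℝ) : 0 ≤ starDisc n α := by
  have hn' : (0 : ℝ) ≤ n - 1 := by
    rw [sub_nonneg]
    exact_mod_cast hn
  have hsum_sq : starDisc n α = (α - 2) ^ 2 * (n - 2) ^ 2 + 4 * (1 - α) ^ 2 * (n - 1) := by
    unfold starDisc
    ring
  rw [hsum_sq]
  positivity

theorem charpoly_alphaDistMatrix_starGraph {n : ℕ} (hn : 2 ≤ n) (α : ℝ) :
    (alphaDistMatrix (starGraph n) α).charpoly =
      (X - C (α * (2 * n - 1) - 2)) ^ (n - 2) *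
        ((X - C (((α + 2) * n - 4 + √(starDisc n α)) / 2)) *
          (X - C (((α + 2) * n - 4 - √(starDisc n α)) / 2))) := by
  have hΔ : √(starDisc n α) ^ 2 =
      (α - 2) ^ 2 * (n : ℝ) ^ 2 + 8 * α * n - 12 * n - 8 * α + 12 :=
    Real.sq_sqrt (starDisc_nonneg (by omega) α)
  have hquot : (α * (2 * n - 1) - 2) • (1 : Matrix (Fin 2) (Fin 2) ℝ) +
      !![2 - α * n, 1 - α; 1 - α, 2 * (1 - α)] * diagonal ![1, (n : ℝ) - 1] =
      !![α * (n - 1), (1 - α) * (n - 1); 1 - α, α * (2 * n - 3) + 2 * (1 - α) * (n - 2)] := by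
    ext i j
    rw [Matrix.add_apply, mul_diagonal]
    fin_cases i <;> fin_cases j <;> simp <;> ring
  rw [alphaDistMatrix_starGraph, charpoly_smul_one_add_submatrix _ _ _ (by simpa using hn),
    Fintype.card_fin, Fintype.card_fin, card_starClass (by omega), hquot, charpoly_fin_two]
  congr 1
  apply X_sq_sub_C_mul_X_add_C_eq
  · rw [trace_fin_two_of]
    ring
  · rw [det_fin_two_of]
    linear_combination (-1 / 4 : ℝ) * hΔ

theorem roots_charpoly_alphaDistMatrix_starGraph {n : ℕ} (hn : 2 ≤ n) (α : ℝ) :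
    (alphaDistMatrix (starGraph n) α).charpoly.roots =
      Multiset.replicate (n - 2) (α * (2 * n - 1) - 2) +
        {((α + 2) * n - 4 + √(starDisc n α)) / 2, ((α + 2) * n - 4 - √(starDisc n α)) / 2} := by
  have hquad := (monic_X_sub_C (((α + 2) * n - 4 + √(starDisc n α)) / 2)).mul
    (monic_X_sub_C (((α + 2) * n - 4 - √(starDisc n α)) / 2))
  rw [charpoly_alphaDistMatrix_starGraph hn,
    roots_mul (((monic_X_sub_C _).pow _).mul hquad).ne_zero, roots_mul hquad.ne_zero, roots_pow,
    roots_X_sub_C, roots_X_sub_C, roots_X_sub_C, Multiset.nsmul_singleton]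
  rfl

/-- Equivalently, the largest eigenvalue `((α+2)n - 4 + √Δ)/2` is at least the mean eigenvalue
`2αW/n`. -/
theorem neg_mul_sqrt_starDisc_le {n : ℕ} (hn : 2 ≤ n) {α : ℝ} (hα0 : 0 ≤ α) (hα1 : α ≤ 1) :
    -(n * √(starDisc n α)) ≤ α * (-3 * (n : ℝ) ^ 2 + 8 * n - 4) + 2 * (n : ℝ) ^ 2 - 4 * n := by
  refine (abs_le_of_sq_le_sq' ?_ (by positivity)).1
  rw [mul_pow, Real.sq_sqrt (starDisc_nonneg (by omega) α)]
  have hm : (2 : ℝ) ≤ n := by exact_mod_cast hn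
  set m : ℝ := (n : ℝ)
  have hf : 0 ≤ (1 - α) * m ^ 2 + α * (m - 2) ^ 2 +
      2 * α * (1 - α) * (m - 1) * (m ^ 2 - 4 * m + 2) := by
    have hα : 0 ≤ α * (1 - α) := mul_nonneg hα0 (sub_nonneg.2 hα1)
    have hm2 : (0 : ℝ) ≤ m - 2 := by linarith
    nlinarith [mul_nonneg (mul_nonneg hα hm2) hm2, sq_nonneg (m * (1 - α) - 2 * α),
      sq_nonneg (m - 2 * α)]
  have hdiff : m ^ 2 * starDisc n α - (α * (-3 * m ^ 2 + 8 * m - 4) + 2 * m ^ 2 - 4 * m) ^ 2 =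
      4 * (m - 1) * ((1 - α) * m ^ 2 + α * (m - 2) ^ 2 +
        2 * α * (1 - α) * (m - 1) * (m ^ 2 - 4 * m + 2)) := by
    unfold starDisc
    ring
  nlinarith [mul_nonneg (by linarith : (0 : ℝ) ≤ m - 1) hf]


theorem stmt_3 {n : ℕ} (hn : 2 ≤ n) (α : ℝ) (hα : α ∈ Set.Icc (0 : ℝ) 1)
    (hA : (alphaDistMatrix (starGraph n) α).IsHermitian) :
    (∑ i, |hA.eigenvalues i - 2 * α * wiener (starGraph n) / n|) =
      (α * (-3 * (n : ℝ) ^ 2 + 8 * n - 4) + 2 * (n : ℝ) ^ 2 - 4 * n +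
          n * Real.sqrt ((α - 2) ^ 2 * (n : ℝ) ^ 2 + 8 * α * n - 12 * n - 8 * α + 12)) /
        (2 * n) +
      |(α * (-3 * (n : ℝ) ^ 2 + 8 * n - 4) + 2 * (n : ℝ) ^ 2 - 4 * n -
          n * Real.sqrt ((α - 2) ^ 2 * (n : ℝ) ^ 2 + 8 * α * n - 12 * n - 8 * α + 12)) /
        (2 * n)| +
      |3 * α - 2 - 2 * α / n| * ((n : ℝ) - 2) := by
  obtain ⟨hα0, hα1⟩ := hα
  have hn0 : (n : ℝ) ≠ 0 := by positivity
  have hshift : ∀ s, ((α + 2) * n - 4 + s) / 2 - 2 * α * ((n : ℝ) - 1) ^ 2 / n =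
      (α * (-3 * (n : ℝ) ^ 2 + 8 * n - 4) + 2 * (n : ℝ) ^ 2 - 4 * n + n * s) / (2 * n) := by
    intro s
    field_simp
    ring
  have hmid : α * (2 * n - 1) - 2 - 2 * α * ((n : ℝ) - 1) ^ 2 / n = 3 * α - 2 - 2 * α / n := by
    field_simp
    ring
  rw [wiener_starGraph (by omega),
    hA.sum_eigenvalues_eq_sum_roots fun x => |x - 2 * α * ((n : ℝ) - 1) ^ 2 / n|,
    roots_charpoly_alphaDistMatrix_starGraph hn]
  simp only [Multiset.map_add, Multiset.sum_add, Multiset.map_replicate, Multiset.sum_replicate,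
    Multiset.insert_eq_cons, Multiset.map_cons, Multiset.sum_cons, Multiset.map_singleton,
    Multiset.sum_singleton, nsmul_eq_mul, Nat.cast_sub hn, sub_eq_add_neg _ √_, hshift, hmid]
  rw [mul_neg, ← sub_eq_add_neg, abs_of_nonneg (div_nonneg
    (neg_le_iff_add_nonneg.1 (neg_mul_sqrt_starDisc_le hn hα0 hα1)) (by positivity))]
  unfold starDisc
  push_cast
  ring
end

section
/- Let G be a simple undirected connected graph with n ≥ 2 vertices and α ∈ [1/2, 1). Set T = max_{v∈V(G)} Tr(v) and t = min_{v∈V(G)} Tr(v), and let σ_1(G) be the largest eigenvalue of D_α(G). Then [ (1−α)(t−1) + √( (1−α)²(t−1)² + 4(α t² + 2(1−α)W(G) − (1−α)(n−1)t) ) ] / 2 ≤ σ_1(G) ≤ [ (1−α)(T−1) + √( (1−α)²(T−1)² + 4(α T² + 2(1−α)W(G) − (1−α)(n−1)T) ) ] / 2. -/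
/-!
Lower bound: the Rayleigh quotient of the all-ones vector gives `n σ₁ ≥ 2 W ≥ n t`, which is
enough for the quadratic inequality in `σ₁`. Upper bound: for a nonnegative matrix, evaluating
`A v = μ v` and `A (A v) = μ² v` at a coordinate `p` where `|v p|` is maximal bounds `μ` by the
row sums of `A` and `A²`. The row sums of `D_α` are the transmissions, so
`σ₁² ≤ α Tr(p) σ₁ + (1 - α) ∑_{j ≠ p} d(p, j) Tr(j)`, and `d(p, j) ≥ 1` bounds the sum by
`(Tr(p) - (n - 1)) T + 2 W - Tr(p)`. Solving the two quadratic inequalities gives the bounds.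
-/

open Finset Matrix Polynomial Real

namespace Matrix

variable {ι : Type*} [Fintype ι]

theorem IsHermitian.dotProduct_mulVec_le [DecidableEq ι] {A : Matrix ι ι ℝ} (hA : A.IsHermitian)
    {σ : ℝ} (hσ : ∀ i, hA.eigenvalues i ≤ σ) (x : ι → ℝ) :
    x ⬝ᵥ (A *ᵥ x) ≤ σ * (x ⬝ᵥ x) := by
  have hB : (algebraMap ℝ (Matrix ι ι ℝ) σ - A).IsHermitian :=
    (isHermitian_diagonal fun _ => σ).sub hA
  have hpsd : (algebraMap ℝ (Matrix ι ι ℝ) σ - A).PosSemidef := by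
    refine hB.posSemidef_iff_eigenvalues_nonneg.mpr fun i => ?_
    have hmem := hB.eigenvalues_mem_spectrum_real i
    rw [← spectrum.singleton_sub_eq, hA.spectrum_real_eq_range_eigenvalues] at hmem
    obtain ⟨_, rfl, _, ⟨j, rfl⟩, hij⟩ := hmem
    simpa [← hij] using hσ j
  have := hpsd.dotProduct_mulVec_nonneg x
  simp only [star_trivial, sub_mulVec, Algebra.algebraMap_eq_smul_one, smul_mulVec, one_mulVec,
    dotProduct_sub, dotProduct_smul, smul_eq_mul] at this
  linarith

theorem abs_mulVec_apply_le {A : Matrix ι ι ℝ} (hA : ∀ i j, 0 ≤ A i j) (v : ι → ℝ) (i : ι) :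
    |(A *ᵥ v) i| ≤ ∑ j, A i j * |v j| :=
  (abs_sum_le_sum_abs _ _).trans_eq <| sum_congr rfl fun j _ => by
    rw [abs_mul, abs_of_nonneg (hA i j)]

theorem abs_mulVec_apply_le_mul {A : Matrix ι ι ℝ} (hA : ∀ i j, 0 ≤ A i j) {v : ι → ℝ} {c : ℝ}
    (hv : ∀ j, |v j| ≤ c) (i : ι) : |(A *ᵥ v) i| ≤ (∑ j, A i j) * c :=
  (abs_mulVec_apply_le hA v i).trans <| by
    rw [sum_mul]; exact sum_le_sum fun j _ => mul_le_mul_of_nonneg_left (hv j) (hA i j)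

theorem exists_abs_le_and_sq_le_of_mulVec_eq_smul [DecidableEq ι] {A : Matrix ι ι ℝ}
    (hA : ∀ i j, 0 ≤ A i j) {μ : ℝ} {v : ι → ℝ} (hv : v ≠ 0) (hAv : A *ᵥ v = μ • v) :
    ∃ p, |μ| ≤ ∑ j, A p j ∧ μ ^ 2 ≤ A p p * |μ| + ∑ j ∈ univ.erase p, A p j * ∑ l, A j l := by
  obtain ⟨i, hi⟩ := Function.ne_iff.mp hv
  obtain ⟨p, -, hp⟩ := exists_max_image univ (fun j => |v j|) ⟨i, mem_univ i⟩
  have hmax : ∀ j, |v j| ≤ |v p| := fun j => hp j (mem_univ j)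
  have hvp : 0 < |v p| := (abs_pos.mpr hi).trans_le (hmax i)
  have hμv : ∀ j, |μ * v j| ≤ (∑ l, A j l) * |v p| := fun j => by
    simpa [hAv] using abs_mulVec_apply_le_mul hA hmax j
  refine ⟨p, le_of_mul_le_mul_right (by simpa [abs_mul] using hμv p) hvp, ?_⟩
  have hA2v : A *ᵥ (μ • v) = μ ^ 2 • v := by rw [mulVec_smul, hAv, smul_smul, sq]
  have hsq : μ ^ 2 * |v p| ≤
      A p p * (|μ| * |v p|) + ∑ j ∈ univ.erase p, A p j * ((∑ l, A j l) * |v p|) :=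
    calc μ ^ 2 * |v p| = |(A *ᵥ (μ • v)) p| := by simp [hA2v, abs_mul]
      _ ≤ ∑ j, A p j * |(μ • v) j| := abs_mulVec_apply_le hA _ p
      _ = A p p * (|μ| * |v p|) + ∑ j ∈ univ.erase p, A p j * |μ * v j| := by
        rw [← add_sum_erase univ _ (mem_univ p)]
        simp only [Pi.smul_apply, smul_eq_mul, abs_mul]
      _ ≤ _ := by gcongr with j; exact hA p j; exact hμv j
  refine le_of_mul_le_mul_right ?_ hvp
  simpa only [add_mul, sum_mul, mul_assoc] using hsq

end Matrix

section AlphaDistance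

variable {n : ℕ} (G : SimpleGraph (Fin n))

theorem alphaDistMatrix_apply_self (α : ℝ) (i : Fin n) :
    alphaDistMatrix G α i i = α * transmission G i := by
  simp [alphaDistMatrix, distMatrix]

theorem alphaDistMatrix_apply_of_ne (α : ℝ) {i j : Fin n} (h : i ≠ j) :
    alphaDistMatrix G α i j = (1 - α) * G.dist i j := by
  simp [alphaDistMatrix, distMatrix, diagonal_apply_ne _ h]

theorem alphaDistMatrix_nonneg {α : ℝ} (h0 : 0 ≤ α) (h1 : α ≤ 1) (i j : Fin n) :
    0 ≤ alphaDistMatrix G α i j := by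
  obtain rfl | h := eq_or_ne i j
  · rw [alphaDistMatrix_apply_self]
    exact mul_nonneg h0 (sum_nonneg fun _ _ => Nat.cast_nonneg _)
  · rw [alphaDistMatrix_apply_of_ne G α h]
    exact mul_nonneg (sub_nonneg.mpr h1) (Nat.cast_nonneg _)

theorem sum_erase_dist_eq_transmission (i : Fin n) :
    ∑ j ∈ univ.erase i, (G.dist i j : ℝ) = transmission G i := by
  rw [transmission, ← add_sum_erase univ _ (mem_univ i)]
  simp

theorem sum_alphaDistMatrix_apply (α : ℝ) (i : Fin n) :
    ∑ j, alphaDistMatrix G α i j = transmission G i := by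
  rw [← add_sum_erase univ _ (mem_univ i), alphaDistMatrix_apply_self,
    sum_congr rfl fun j hj => alphaDistMatrix_apply_of_ne G α (ne_of_mem_erase hj).symm,
    ← mul_sum, sum_erase_dist_eq_transmission]
  ring

theorem sum_transmission : ∑ i, transmission G i = 2 * wiener G := by
  simp only [transmission, wiener]
  ring

theorem sum_erase_dist_sub_one (i : Fin n) :
    ∑ j ∈ univ.erase i, ((G.dist i j : ℝ) - 1) = transmission G i - (n - 1) := by
  rw [sum_sub_distrib, sum_erase_dist_eq_transmission, sum_const, card_erase_of_mem (mem_univ i),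
    card_univ, Fintype.card_fin, nsmul_one, Nat.cast_pred i.pos]

variable {G}

theorem one_le_dist_of_ne (hG : G.Connected) {i j : Fin n} (h : i ≠ j) : (1 : ℝ) ≤ G.dist i j :=
  Nat.one_le_cast.mpr (hG.pos_dist_of_ne h)

theorem sub_one_le_transmission (hG : G.Connected) (i : Fin n) :
    (n : ℝ) - 1 ≤ transmission G i := by
  have h := sum_erase_dist_sub_one G i
  have : 0 ≤ ∑ j ∈ univ.erase i, ((G.dist i j : ℝ) - 1) :=
    sum_nonneg fun j hj => sub_nonneg.mpr (one_le_dist_of_ne hG (ne_of_mem_erase hj).symm)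
  linarith

theorem sum_erase_dist_mul_transmission_le (hG : G.Connected) {T : ℝ}
    (hT : ∀ j, transmission G j ≤ T) (p : Fin n) :
    ∑ j ∈ univ.erase p, (G.dist p j : ℝ) * transmission G j ≤
      (transmission G p - (n - 1)) * T + (2 * wiener G - transmission G p) :=
  calc ∑ j ∈ univ.erase p, (G.dist p j : ℝ) * transmission G j
      = ∑ j ∈ univ.erase p, ((G.dist p j : ℝ) - 1) * transmission G j +
          ∑ j ∈ univ.erase p, transmission G j := by
        rw [← sum_add_distrib]; exact sum_congr rfl fun _ _ => by ring
    _ ≤ ∑ j ∈ univ.erase p, ((G.dist p j : ℝ) - 1) * T + ∑ j ∈ univ.erase p, transmission G j := by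
        gcongr with j hj
        · exact sub_nonneg.mpr (one_le_dist_of_ne hG (ne_of_mem_erase hj).symm)
        · exact hT j
    _ = _ := by
        rw [← sum_mul, sum_erase_dist_sub_one, sum_erase_eq_sub (mem_univ p), sum_transmission]

theorem mul_le_two_mul_wiener {t : ℝ} (ht : ∀ i, t ≤ transmission G i) :
    n * t ≤ 2 * wiener G := by
  simpa [sum_transmission] using sum_le_sum fun i (_ : i ∈ univ) => ht i

theorem two_mul_wiener_le {α : ℝ} (hA : (alphaDistMatrix G α).IsHermitian) {σ : ℝ}
    (hσ : ∀ i, hA.eigenvalues i ≤ σ) : 2 * wiener G ≤ n * σ := by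
  have h := hA.dotProduct_mulVec_le hσ fun _ => 1
  simpa [dotProduct, mulVec, sum_alphaDistMatrix_apply, sum_transmission, mul_comm] using h

theorem sq_le_of_mulVec_eq_smul (hG : G.Connected) {α : ℝ} (hα0 : 1 / 2 ≤ α) (hα1 : α ≤ 1)
    {μ : ℝ} (hμ : 0 ≤ μ) {v : Fin n → ℝ} (hv : v ≠ 0) (hAv : alphaDistMatrix G α *ᵥ v = μ • v)
    {T : ℝ} (hT : ∀ j, transmission G j ≤ T) (hT1 : 1 ≤ T) :
    μ ^ 2 ≤ (1 - α) * (T - 1) * μ +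
      (α * T ^ 2 + 2 * (1 - α) * wiener G - (1 - α) * (n - 1) * T) := by
  obtain ⟨p, hμp, hμ2⟩ := exists_abs_le_and_sq_le_of_mulVec_eq_smul
    (alphaDistMatrix_nonneg G (by linarith) hα1) hv hAv
  simp only [abs_of_nonneg hμ, sum_alphaDistMatrix_apply, alphaDistMatrix_apply_self] at hμp hμ2
  rw [sum_congr rfl fun j hj => by
    rw [alphaDistMatrix_apply_of_ne G α (ne_of_mem_erase hj).symm, mul_assoc], ← mul_sum] at hμ2
  have hS := mul_le_mul_of_nonneg_left (sum_erase_dist_mul_transmission_le hG hT p)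
    (sub_nonneg.mpr hα1)
  have hTp := hT p
  -- the gap is `(T - Tr p) (α μ + (1 - α)(T - 1)) + (T - μ) ((2α - 1) T + 1 - α)`
  nlinarith [mul_nonneg (sub_nonneg.mpr hTp)
      (by nlinarith : 0 ≤ α * μ + (1 - α) * (T - 1)),
    mul_nonneg (by linarith : 0 ≤ T - μ) (by nlinarith : 0 ≤ (2 * α - 1) * T + (1 - α))]

theorem le_sq_of_two_mul_wiener_le [NeZero n] {α : ℝ} (hα0 : 0 ≤ α) (hα1 : α ≤ 1) {t σ : ℝ}
    (htn : (n : ℝ) - 1 ≤ t) (htσ : t ≤ σ) (hσ : 2 * wiener G ≤ n * σ) :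
    (1 - α) * (t - 1) * σ + (α * t ^ 2 + 2 * (1 - α) * wiener G - (1 - α) * (n - 1) * t) ≤
      σ ^ 2 := by
  have hn : (1 : ℝ) ≤ n := Nat.one_le_cast.mpr NeZero.one_le
  -- the gap is `(σ - t) (σ + α t - (1 - α)(n - 1)) + (1 - α)(n σ - 2 W)`
  nlinarith [mul_nonneg (sub_nonneg.mpr htσ)
      (by nlinarith : 0 ≤ σ + α * t - (1 - α) * (n - 1)),
    mul_nonneg (sub_nonneg.mpr hα1) (sub_nonneg.mpr hσ)]

end AlphaDistance

theorem le_half_add_sqrt_of_sq_le {x b c : ℝ} (h : x ^ 2 ≤ b * x + c) :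
    x ≤ (b + √(b ^ 2 + 4 * c)) / 2 := by
  have := Real.abs_le_sqrt (show (2 * x - b) ^ 2 ≤ b ^ 2 + 4 * c by nlinarith)
  linarith [le_abs_self (2 * x - b)]

theorem half_add_sqrt_le_of_le_sq {x b c : ℝ} (h : b * x + c ≤ x ^ 2) (hb : b ≤ 2 * x) :
    (b + √(b ^ 2 + 4 * c)) / 2 ≤ x := by
  have := Real.sqrt_le_sqrt (show b ^ 2 + 4 * c ≤ (2 * x - b) ^ 2 by nlinarith)
  rw [Real.sqrt_sq (by linarith)] at this
  linarith

theorem stmt_11 {n : ℕ} (hn : 2 ≤ n) (G : SimpleGraph (Fin n)) (hG : G.Connected)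
    (α : ℝ) (hα : α ∈ Set.Ico (1 / 2 : ℝ) 1)
    (hA : (alphaDistMatrix G α).IsHermitian) (σ₁ : ℝ)
    (hσ : IsGreatest (Set.range hA.eigenvalues) σ₁) :
    ((1 - α) * (sInf (Set.range (transmission G)) - 1) +
        Real.sqrt ((1 - α) ^ 2 * (sInf (Set.range (transmission G)) - 1) ^ 2 +
          4 * (α * (sInf (Set.range (transmission G))) ^ 2 + 2 * (1 - α) * wiener G -
            (1 - α) * ((n : ℝ) - 1) * sInf (Set.range (transmission G))))) / 2 ≤ σ₁ ∧
    σ₁ ≤ ((1 - α) * (sSup (Set.range (transmission G)) - 1) +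
        Real.sqrt ((1 - α) ^ 2 * (sSup (Set.range (transmission G)) - 1) ^ 2 +
          4 * (α * (sSup (Set.range (transmission G))) ^ 2 + 2 * (1 - α) * wiener G -
            (1 - α) * ((n : ℝ) - 1) * sSup (Set.range (transmission G))))) / 2 := by
  have : NeZero n := ⟨by omega⟩
  obtain ⟨hα0, hα1⟩ := hα
  set t := sInf (Set.range (transmission G))
  set T := sSup (Set.range (transmission G))
  have ht : ∀ i, t ≤ transmission G i := fun i => csInf_le (Set.finite_range _).bddBelow ⟨i, rfl⟩
  have hT : ∀ i, transmission G i ≤ T := fun i => le_csSup (Set.finite_range _).bddAbove ⟨i, rfl⟩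
  have htn : (n : ℝ) - 1 ≤ t :=
    le_csInf (Set.range_nonempty _) (Set.forall_mem_range.mpr (sub_one_le_transmission hG))
  have hn1 : (1 : ℝ) ≤ n - 1 := by
    have : (2 : ℝ) ≤ n := by exact_mod_cast hn
    linarith
  have hW := two_mul_wiener_le hA fun i => hσ.2 ⟨i, rfl⟩
  have htσ : t ≤ σ₁ :=
    le_of_mul_le_mul_left ((mul_le_two_mul_wiener ht).trans hW) (by linarith)
  obtain ⟨i₀, hi₀⟩ := hσ.1
  have hv : ⇑(hA.eigenvectorBasis i₀) ≠ 0 := fun h =>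
    hA.eigenvectorBasis.orthonormal.ne_zero i₀ (WithLp.ofLp_injective 2 h)
  have hup := sq_le_of_mulVec_eq_smul hG (by linarith) hα1.le (by linarith) hv
    (hi₀ ▸ hA.mulVec_eigenvectorBasis i₀) hT (by linarith [ht 0, hT 0])
  have hlow := le_sq_of_two_mul_wiener_le (by linarith) hα1.le htn htσ hW
  simp only [← mul_pow]
  refine ⟨half_add_sqrt_le_of_le_sq hlow ?_, le_half_add_sqrt_of_sq_le hup⟩
  nlinarith
end

section
/- Let G be a simple undirected connected graph with n ≥ 2 vertices and α ∈ [0,1]. Then the α-distance Estrada index satisfies DEE_α(G) ≤ n + 2αW(G) − 1 − ω + e^ω, where ω = √( α² Σ_{i=1}^n Tr(v_i)² + 2(1−α)² S ) and S = Σ_{1≤i<j≤n} d(v_i,v_j)². -/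
open Finset Matrix Polynomial Real

/-- `S = ∑_{i<j} d(v_i,v_j)²`. -/
noncomputable def distSq {n : ℕ} (G : SimpleGraph (Fin n)) : ℝ :=
  ∑ p ∈ Finset.univ.filter (fun p : Fin n × Fin n => p.1 < p.2), (G.dist p.1 p.2 : ℝ) ^ 2


/-!
Write `R(t) = eᵗ - 1 - t`. For every real `x`, `eˣ ≤ 1 + x + R(|x|)`, so summing over the
eigenvalues `σᵢ` of `D_α(G)` gives `DEE_α(G) ≤ n + tr D_α + Σ R(|σᵢ|)`. Since `R(t) / t²` is
increasing on `t ≥ 0` (all coefficients of its power series are nonnegative) and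
`Σ σᵢ² = tr D_α² = ω²`, each `|σᵢ| ≤ ω` and `Σ R(|σᵢ|) ≤ Σ (σᵢ² / ω²) R(ω) = R(ω)`.
Finally `tr D_α = 2αW(G)` and `tr D_α² = α² Σ Tr(vᵢ)² + 2(1-α)² S`.
-/

noncomputable def expRemainder (t : ℝ) : ℝ := exp t - 1 - t

open Nat in
lemma expRemainder_eq_tsum (t : ℝ) : expRemainder t = ∑' k : ℕ, t ^ (k + 2) / (k + 2)! := by
  rw [expRemainder, exp_eq_exp_ℝ, NormedSpace.exp_eq_tsum_div]
  beta_reduce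
  rw [← (summable_pow_div_factorial t).sum_add_tsum_nat_add 2]
  norm_num [sum_range_succ]
  ring

lemma expRemainder_nonneg (t : ℝ) : 0 ≤ expRemainder t := by
  have := add_one_le_exp t
  rw [expRemainder]
  linarith

lemma exp_le_one_add_add_expRemainder_abs (x : ℝ) : exp x ≤ 1 + x + expRemainder |x| := by
  rcases le_or_gt 0 x with hx | hx
  · rw [abs_of_nonneg hx, expRemainder]
    linarith
  · have hsinh : sinh x < x := sinh_lt_self_iff.2 hx
    rw [sinh_eq] at hsinh
    rw [abs_of_neg hx, expRemainder]
    linarith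

open Nat in
lemma sq_mul_expRemainder_le {c ω : ℝ} (hc : 0 ≤ c) (hcω : c ≤ ω) :
    ω ^ 2 * expRemainder c ≤ c ^ 2 * expRemainder ω := by
  have hsumm (t : ℝ) : Summable fun k : ℕ => t ^ (k + 2) / (k + 2)! :=
    (summable_nat_add_iff 2).2 (summable_pow_div_factorial t)
  rw [expRemainder_eq_tsum, expRemainder_eq_tsum, ← tsum_mul_left, ← tsum_mul_left]
  refine ((hsumm c).mul_left _).tsum_le_tsum (fun k => ?_) ((hsumm ω).mul_left _)
  have hpow : c ^ k ≤ ω ^ k := pow_le_pow_left₀ hc hcω k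
  rw [mul_div_assoc', mul_div_assoc']
  refine div_le_div_of_nonneg_right ?_ (by positivity)
  calc ω ^ 2 * c ^ (k + 2) = c ^ 2 * (ω ^ 2 * c ^ k) := by ring
    _ ≤ c ^ 2 * (ω ^ 2 * ω ^ k) := by gcongr
    _ = c ^ 2 * ω ^ (k + 2) := by ring

lemma sum_expRemainder_le_of_sum_sq_le {ι : Type*} [Fintype ι] {c : ι → ℝ} {ω : ℝ}
    (hc : ∀ i, 0 ≤ c i) (hω : 0 ≤ ω) (hsum : ∑ i, c i ^ 2 ≤ ω ^ 2) :
    ∑ i, expRemainder (c i) ≤ expRemainder ω := by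
  have hsq_le (i : ι) : c i ^ 2 ≤ ω ^ 2 :=
    (single_le_sum (fun j _ => sq_nonneg (c j)) (mem_univ i)).trans hsum
  have hle (i : ι) : c i ≤ ω := (pow_le_pow_iff_left₀ (hc i) hω two_ne_zero).1 (hsq_le i)
  rcases hω.eq_or_lt with rfl | hpos
  · have hzero (i : ι) : c i = 0 := le_antisymm (hle i) (hc i)
    simp [hzero, expRemainder]
  refine le_of_mul_le_mul_left ?_ (pow_pos hpos 2)
  calc ω ^ 2 * ∑ i, expRemainder (c i)
      ≤ ∑ i, c i ^ 2 * expRemainder ω := by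
        rw [mul_sum]
        exact sum_le_sum fun i _ => sq_mul_expRemainder_le (hc i) (hle i)
    _ = (∑ i, c i ^ 2) * expRemainder ω := (sum_mul ..).symm
    _ ≤ ω ^ 2 * expRemainder ω := by gcongr; exact expRemainder_nonneg ω

theorem Matrix.IsHermitian.trace_mul_self_eq_sum_sq_eigenvalues {𝕜 ι : Type*} [RCLike 𝕜]
    [Fintype ι] [DecidableEq ι] {A : Matrix ι ι 𝕜} (hA : A.IsHermitian) :
    (A * A).trace = ∑ i, (hA.eigenvalues i : 𝕜) ^ 2 := by
  conv_lhs => rw [hA.spectral_theorem, ← map_mul, Unitary.conjStarAlgAut_apply, trace_mul_cycle,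
    Unitary.coe_star_mul_self, one_mul, diagonal_mul_diagonal, trace_diagonal]
  simp [sq]

theorem Matrix.IsHermitian.sum_exp_eigenvalues_le {ι : Type*} [Fintype ι] [DecidableEq ι]
    {A : Matrix ι ι ℝ} (hA : A.IsHermitian) :
    ∑ i, Real.exp (hA.eigenvalues i) ≤
      Fintype.card ι + A.trace + expRemainder (√(A * A).trace) := by
  have htrace : A.trace = ∑ i, hA.eigenvalues i := by simpa using hA.trace_eq_sum_eigenvalues
  have htrace_sq : (A * A).trace = ∑ i, |hA.eigenvalues i| ^ 2 := by
    simpa using hA.trace_mul_self_eq_sum_sq_eigenvalues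
  have hrem : ∑ i, expRemainder |hA.eigenvalues i| ≤ expRemainder (√(A * A).trace) :=
    sum_expRemainder_le_of_sum_sq_le (fun i => abs_nonneg _) (sqrt_nonneg _) <| by
      rw [sq_sqrt (htrace_sq ▸ sum_nonneg fun i _ => sq_nonneg _), htrace_sq]
  calc ∑ i, Real.exp (hA.eigenvalues i)
      ≤ ∑ i, (1 + hA.eigenvalues i + expRemainder |hA.eigenvalues i|) :=
        sum_le_sum fun i _ => exp_le_one_add_add_expRemainder_abs _
    _ = Fintype.card ι + A.trace + ∑ i, expRemainder |hA.eigenvalues i| := by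
        simp [sum_add_distrib, htrace]
    _ ≤ Fintype.card ι + A.trace + expRemainder (√(A * A).trace) := by gcongr

lemma Finset.sum_sum_eq_two_nsmul_sum_filter_lt {ι M : Type*} [Fintype ι] [LinearOrder ι]
    [AddCommMonoid M] (f : ι → ι → M) (hsymm : ∀ i j, f i j = f j i) (hdiag : ∀ i, f i i = 0) :
    ∑ i, ∑ j, f i j = 2 • ∑ p ∈ univ.filter (fun p : ι × ι => p.1 < p.2), f p.1 p.2 := by
  have hsplit (i j : ι) :
      f i j = (if i < j then f i j else 0) + (if j < i then f j i else 0) := by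
    rcases lt_trichotomy i j with h | rfl | h
    · simp [h, h.not_gt]
    · simp [hdiag]
    · simp [h, h.not_gt, hsymm]
  rw [sum_filter, Fintype.sum_prod_type, two_nsmul]
  calc ∑ i, ∑ j, f i j
      = ∑ i, ∑ j, ((if i < j then f i j else 0) + (if j < i then f j i else 0)) := by
        simp only [← hsplit]
    _ = ∑ i, ∑ j, (if i < j then f i j else 0) + ∑ j, ∑ i, (if i < j then f i j else 0) := by
        simp only [sum_add_distrib]
    _ = ∑ i, ∑ j, (if i < j then f i j else 0) + ∑ i, ∑ j, (if i < j then f i j else 0) := by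
        rw [sum_comm]

lemma trace_alphaDistMatrix {n : ℕ} (G : SimpleGraph (Fin n)) (α : ℝ) :
    (alphaDistMatrix G α).trace = 2 * α * wiener G := by
  have hdist : (distMatrix G).trace = 0 := by simp [Matrix.trace, distMatrix]
  simp only [alphaDistMatrix, trace_add, trace_smul, trace_diagonal, hdist, smul_eq_mul,
    transmission, wiener]
  ring

lemma sum_sum_dist_sq {n : ℕ} (G : SimpleGraph (Fin n)) :
    ∑ i, ∑ j, (G.dist i j : ℝ) ^ 2 = 2 * distSq G := by
  rw [sum_sum_eq_two_nsmul_sum_filter_lt _ (fun i j => by rw [SimpleGraph.dist_comm]) (by simp),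
    nsmul_eq_mul, Nat.cast_ofNat, distSq]

lemma trace_alphaDistMatrix_mul_self {n : ℕ} (G : SimpleGraph (Fin n)) (α : ℝ) :
    (alphaDistMatrix G α * alphaDistMatrix G α).trace
      = α ^ 2 * ∑ i, transmission G i ^ 2 + 2 * (1 - α) ^ 2 * distSq G := by
  have hcross : (diagonal (transmission G) * distMatrix G).trace = 0 := by
    simp [Matrix.trace, distMatrix]
  have hdist : (distMatrix G * distMatrix G).trace = 2 * distSq G := by
    rw [← sum_sum_dist_sq]
    simp [Matrix.trace, mul_apply, distMatrix, sq, SimpleGraph.dist_comm]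
  simp only [alphaDistMatrix, add_mul, mul_add, smul_mul_smul_comm, trace_add, trace_smul,
    diagonal_mul_diagonal, trace_diagonal, hcross, hdist]
  rw [trace_mul_comm, hcross]
  simp only [smul_eq_mul, sq]
  ring

theorem stmt_14_general {n : ℕ} (G : SimpleGraph (Fin n)) (α : ℝ)
    (hA : (alphaDistMatrix G α).IsHermitian) :
    (∑ i, Real.exp (hA.eigenvalues i)) ≤
      (n : ℝ) + 2 * α * wiener G - 1 -
        Real.sqrt (α ^ 2 * (∑ i, (transmission G i) ^ 2) + 2 * (1 - α) ^ 2 * distSq G) +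
        Real.exp
          (Real.sqrt (α ^ 2 * (∑ i, (transmission G i) ^ 2) +
            2 * (1 - α) ^ 2 * distSq G)) := by
  have h := hA.sum_exp_eigenvalues_le
  rw [trace_alphaDistMatrix, trace_alphaDistMatrix_mul_self, Fintype.card_fin, expRemainder] at h
  linarith

theorem stmt_14 {n : ℕ} (hn : 2 ≤ n) (G : SimpleGraph (Fin n)) (hG : G.Connected)
    (α : ℝ) (hα : α ∈ Set.Icc (0 : ℝ) 1)
    (hA : (alphaDistMatrix G α).IsHermitian) :
    (∑ i, Real.exp (hA.eigenvalues i)) ≤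
      (n : ℝ) + 2 * α * wiener G - 1 -
        Real.sqrt (α ^ 2 * (∑ i, (transmission G i) ^ 2) + 2 * (1 - α) ^ 2 * distSq G) +
        Real.exp
          (Real.sqrt (α ^ 2 * (∑ i, (transmission G i) ^ 2) +
            2 * (1 - α) ^ 2 * distSq G)) :=
  stmt_14_general G α hA
end
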